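/- Let F_n be the 2×2 stochastic matrix with rows (1 − 1/(n+1), 1/(n+1)) and (1/(n+1), 1 − 1/(n+1)). Then the ℓ¹ distance between the two rows of the product F_{n+m} ··· F_n equals 2 Π_{i=0}^{m} (1 − 2/(n+i+1)), and this product tends to 0 as m → ∞ for every fixed n. -/
import Mathlib

open Filter Topology

/-- The product `F (n+m) * F (n+m-1) * ⋯ * F n` of a sequence of `2×2` matrices. -/
def matProd (F : ℕ → Matrix (Fin 2) (Fin 2) ℝ) (n : ℕ) : ℕ → Matrix (Fin 2) (Fin 2) ℝ
  | 0 => F n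
  | m + 1 => F (n + m + 1) * matProd F n m

lemma matProd_struct (F : ℕ → Matrix (Fin 2) (Fin 2) ℝ)
    (hF : ∀ i : ℕ, F i = !![1 - 1/(i + 1 : ℝ), 1/(i + 1 : ℝ);
                           1/(i + 1 : ℝ), 1 - 1/(i + 1 : ℝ)])
    (n : ℕ) : ∀ m : ℕ,
    matProd F n m 1 1 = matProd F n m 0 0 ∧
    matProd F n m 1 0 = matProd F n m 0 1 ∧
    matProd F n m 0 0 + matProd F n m 0 1 = 1 ∧
    matProd F n m 0 0 - matProd F n m 0 1 =
      ∏ i ∈ Finset.range (m + 1), (1 - 2/(n + i + 1 : ℝ)) := by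
  intro m
  induction m with
  | zero =>
    have h0 : matProd F n 0 = F n := rfl
    rw [h0, hF n]
    rw [Finset.range_one, Finset.prod_singleton]
    norm_num
    rw [div_eq_mul_inv]; ring
  | succ m ih =>
    obtain ⟨h11, h10, hsum, hdiff⟩ := ih
    set c : ℝ := 1/((n:ℝ)+m+2) with hcdef
    have e00 : F (n+m+1) 0 0 = 1 - c := by rw [hF]; simp; rw [hcdef, one_div]; ring
    have e01 : F (n+m+1) 0 1 = c := by rw [hF]; simp; rw [hcdef, one_div]; ring
    have e10 : F (n+m+1) 1 0 = c := by rw [hF]; simp; rw [hcdef, one_div]; ring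
    have e11 : F (n+m+1) 1 1 = 1 - c := by rw [hF]; simp; rw [hcdef, one_div]; ring
    have hmul : ∀ i j : Fin 2, matProd F n (m+1) i j =
        F (n + m + 1) i 0 * matProd F n m 0 j + F (n + m + 1) i 1 * matProd F n m 1 j := by
      intro i j
      show (F (n + m + 1) * matProd F n m) i j = _
      rw [Matrix.mul_apply, Fin.sum_univ_two]
    simp only [hmul, h11, h10, e00, e01, e10, e11]
    refine ⟨by ring, by ring, by linarith, ?_⟩
    rw [Finset.prod_range_succ, ← hdiff]
    have : ((n : ℝ) + (m+1 : ℕ) + 1) = (n:ℝ)+m+2 := by push_cast; ring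
    rw [this]
    ring

/-- For the stochastic matrices `F i = [[1 - 1/(i+1), 1/(i+1)],[1/(i+1), 1 - 1/(i+1)]]`,
the `ℓ¹` distance between the two rows of `F (n+m) ⋯ F n` equals
`2 ∏_{i=0}^{m} (1 - 2/(n+i+1))`, and this quantity tends to `0` as `m → ∞`. -/
theorem stmt13 (F : ℕ → Matrix (Fin 2) (Fin 2) ℝ)
    (hF : ∀ i : ℕ, F i = !![1 - 1/(i + 1 : ℝ), 1/(i + 1 : ℝ);
                           1/(i + 1 : ℝ), 1 - 1/(i + 1 : ℝ)])
    (n : ℕ) (hn : 1 ≤ n) :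
    (∀ m : ℕ,
      |matProd F n m 0 0 - matProd F n m 1 0| + |matProd F n m 0 1 - matProd F n m 1 1| =
        2 * ∏ i ∈ Finset.range (m + 1), (1 - 2/(n + i + 1 : ℝ))) ∧
    Tendsto (fun m : ℕ => 2 * ∏ i ∈ Finset.range (m + 1), (1 - 2/(n + i + 1 : ℝ)))
      atTop (𝓝 0) := by
  have hn' : (1:ℝ) ≤ n := by exact_mod_cast hn
  have hfac : ∀ i : ℕ, (0:ℝ) ≤ 1 - 2/(n + i + 1 : ℝ) := by
    intro i
    have hi : (0:ℝ) ≤ i := Nat.cast_nonneg i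
    have h2 : (2:ℝ) ≤ (n:ℝ) + i + 1 := by linarith
    have : 2/((n:ℝ)+i+1) ≤ 1 := by
      rw [div_le_one (by linarith)]; linarith
    linarith
  have hP : ∀ m : ℕ, (0:ℝ) ≤ ∏ i ∈ Finset.range (m+1), (1 - 2/(n+i+1:ℝ)) :=
    fun m => Finset.prod_nonneg fun i _ => hfac i
  constructor
  · intro m
    obtain ⟨h11, h10, hsum, hdiff⟩ := matProd_struct F hF n m
    rw [h10, h11, abs_sub_comm (matProd F n m 0 1) (matProd F n m 0 0), hdiff,
      abs_of_nonneg (hP m)]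
    ring
  · have hub : ∀ m : ℕ, ∏ i ∈ Finset.range (m+1), (1 - 2/(n+i+1:ℝ)) ≤
        Real.exp (-(∑ i ∈ Finset.range (m+1), 2/(n+i+1:ℝ))) := by
      intro m
      have : Real.exp (-(∑ i ∈ Finset.range (m+1), 2/(n+i+1:ℝ))) =
          ∏ i ∈ Finset.range (m+1), Real.exp (-(2/(n+i+1:ℝ))) := by
        rw [← Real.exp_sum, Finset.sum_neg_distrib]
      rw [this]
      apply Finset.prod_le_prod (fun i _ => hfac i)
      intro i _
      have := Real.add_one_le_exp (-(2/((n:ℝ)+i+1)))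
      linarith
    have hS : Tendsto (fun m : ℕ => ∑ i ∈ Finset.range (m+1), 2/(n+i+1:ℝ)) atTop atTop := by
      have hH : Tendsto (fun m : ℕ => (2/((n:ℝ)+1)) *
          ∑ i ∈ Finset.range (m+1), 1/((i:ℝ)+1)) atTop atTop := by
        have hpos : (0:ℝ) < 2/((n:ℝ)+1) := by positivity
        have hH0 : Tendsto (fun m : ℕ => ∑ i ∈ Finset.range (m+1), 1/((i:ℝ)+1))
            atTop atTop :=
          Real.tendsto_sum_range_one_div_nat_succ_atTop.comp (tendsto_add_atTop_nat 1)
        exact hH0.const_mul_atTop hpos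
      apply tendsto_atTop_mono _ hH
      intro m
      rw [Finset.mul_sum]
      apply Finset.sum_le_sum
      intro i _
      have hi : (0:ℝ) ≤ i := Nat.cast_nonneg i
      have h1 : (0:ℝ) < (n:ℝ)+i+1 := by linarith
      have h2 : ((n:ℝ)+i+1) ≤ ((n:ℝ)+1)*((i:ℝ)+1) := by nlinarith
      calc (2/((n:ℝ)+1)) * (1/((i:ℝ)+1)) = 2 / (((n:ℝ)+1)*((i:ℝ)+1)) := by
            rw [div_mul_div_comm, mul_one]
        _ ≤ 2/((n:ℝ)+i+1) := by
            apply div_le_div_of_nonneg_left (by norm_num) h1 h2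
    have hexp : Tendsto (fun m : ℕ => Real.exp (-(∑ i ∈ Finset.range (m+1), 2/(n+i+1:ℝ))))
        atTop (𝓝 0) :=
      Real.tendsto_exp_atBot.comp (tendsto_neg_atBot_iff.mpr hS)
    have h0 : Tendsto (fun m : ℕ => ∏ i ∈ Finset.range (m+1), (1 - 2/(n+i+1:ℝ)))
        atTop (𝓝 0) := squeeze_zero hP hub hexp
    have := h0.const_mul 2
    simpa using this
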